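/- arXiv:1408.2869 — 2 statements merged into one kernel-verified Lean document; each statement's English description precedes it below -/
import Mathlib

section
/- Let m₁, m₂ ∈ ℝ^d and let S₁, S₂ be positive definite self-adjoint real d×d matrices. Define m = (S₁+S₂)⁻¹(S₁m₁ + S₂m₂), S = S₁+S₂, and W = (S₁⁻¹+S₂⁻¹)⁻¹. Then −mᵀSm + m₁ᵀS₁m₁ + m₂ᵀS₂m₂ = (m₁−m₂)ᵀW(m₁−m₂). -/
open Matrix

/-!
With `A = S₁ + S₂`, the matrix `W = (S₁⁻¹ + S₂⁻¹)⁻¹` equals both `S₁ A⁻¹ S₂` and `S₂ A⁻¹ S₁`,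
hence `Sᵢ A⁻¹ Sᵢ = Sᵢ - W`. Since `A m = S₁ m₁ + S₂ m₂ =: u`, the term `mᵀ A m` is `uᵀ A⁻¹ u`,
and expanding it bilinearly with these four identities leaves exactly
`m₁ᵀ S₁ m₁ + m₂ᵀ S₂ m₂ - (m₁ - m₂)ᵀ W (m₁ - m₂)`.
-/

namespace Matrix

theorem mulVec_dotProduct_mulVec {l m n K : Type*} [Fintype l] [Fintype m] [Fintype n]
    [CommSemiring K] (P : Matrix m n K) (M : Matrix m l K) (x : n → K) (y : l → K) :
    (P *ᵥ x) ⬝ᵥ (M *ᵥ y) = x ⬝ᵥ ((Pᵀ * M) *ᵥ y) := by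
  rw [← vecMul_transpose, ← dotProduct_mulVec, mulVec_mulVec]

variable {n K : Type*} [Fintype n] [DecidableEq n] [CommRing K]

theorem inv_add_inv_inv_eq_mul_inv_add_mul {A B : Matrix n n K} (hA : IsUnit A.det)
    (hB : IsUnit B.det) :
    (A⁻¹ + B⁻¹)⁻¹ = B * (A + B)⁻¹ * A := by
  rw [inv_add_inv (by simp only [isUnit_iff_isUnit_det, hA, hB]), mul_inv_rev, mul_inv_rev,
    nonsing_inv_nonsing_inv _ hA, nonsing_inv_nonsing_inv _ hB, Matrix.mul_assoc]

theorem mul_inv_add_mul_add_mul_inv_add_mul {A B : Matrix n n K} (h : IsUnit (A + B).det) :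
    A * (A + B)⁻¹ * A + A * (A + B)⁻¹ * B = A := by
  rw [← mul_add, nonsing_inv_mul_cancel_right _ _ h]

theorem add_mulVec_dotProduct_inv_add_mulVec {S₁ S₂ : Matrix n n K}
    (hS₁ : S₁.IsSymm) (hS₂ : S₂.IsSymm) (h₁ : IsUnit S₁.det) (h₂ : IsUnit S₂.det)
    (h : IsUnit (S₁ + S₂).det) (m₁ m₂ : n → K) :
    (S₁ *ᵥ m₁ + S₂ *ᵥ m₂) ⬝ᵥ ((S₁ + S₂)⁻¹ *ᵥ (S₁ *ᵥ m₁ + S₂ *ᵥ m₂)) =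
      m₁ ⬝ᵥ (S₁ *ᵥ m₁) + m₂ ⬝ᵥ (S₂ *ᵥ m₂) -
        (m₁ - m₂) ⬝ᵥ ((S₁⁻¹ + S₂⁻¹)⁻¹ *ᵥ (m₁ - m₂)) := by
  set W := (S₁⁻¹ + S₂⁻¹)⁻¹
  have hW₁₂ : S₁ * (S₁ + S₂)⁻¹ * S₂ = W := by
    rw [add_comm S₁ S₂, ← inv_add_inv_inv_eq_mul_inv_add_mul h₂ h₁, add_comm]
  have hW₂₁ : S₂ * (S₁ + S₂)⁻¹ * S₁ = W := (inv_add_inv_inv_eq_mul_inv_add_mul h₁ h₂).symm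
  have h₁₁ : S₁ * (S₁ + S₂)⁻¹ * S₁ = S₁ - W := by
    rw [← hW₁₂, eq_sub_iff_add_eq, mul_inv_add_mul_add_mul_inv_add_mul h]
  have h₂₂ : S₂ * (S₁ + S₂)⁻¹ * S₂ = S₂ - W := by
    rw [← hW₂₁, eq_sub_iff_add_eq, add_comm S₁ S₂,
      mul_inv_add_mul_add_mul_inv_add_mul (by rwa [add_comm])]
  simp only [mulVec_add, mulVec_mulVec, add_dotProduct, dotProduct_add, mulVec_dotProduct_mulVec,
    hS₁.eq, hS₂.eq, ← Matrix.mul_assoc, h₁₁, h₂₂, hW₁₂, hW₂₁, sub_mulVec, mulVec_sub,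
    dotProduct_sub, sub_dotProduct]
  ring

end Matrix

/-- With `m = (S₁+S₂)⁻¹(S₁m₁+S₂m₂)`, `S = S₁+S₂`, `W = (S₁⁻¹+S₂⁻¹)⁻¹`
for positive definite self-adjoint `S₁, S₂`:
`−mᵀSm + m₁ᵀS₁m₁ + m₂ᵀS₂m₂ = (m₁−m₂)ᵀW(m₁−m₂)`. -/
theorem stmt_2 (d : ℕ) (m₁ m₂ : Fin d → ℝ)
    (S₁ S₂ : Matrix (Fin d) (Fin d) ℝ) (h₁ : S₁.PosDef) (h₂ : S₂.PosDef)
    (m : Fin d → ℝ) (hm : m = (S₁ + S₂)⁻¹ *ᵥ (S₁ *ᵥ m₁ + S₂ *ᵥ m₂))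
    (S : Matrix (Fin d) (Fin d) ℝ) (hS : S = S₁ + S₂)
    (W : Matrix (Fin d) (Fin d) ℝ) (hW : W = (S₁⁻¹ + S₂⁻¹)⁻¹) :
    -(m ⬝ᵥ (S *ᵥ m)) + m₁ ⬝ᵥ (S₁ *ᵥ m₁) + m₂ ⬝ᵥ (S₂ *ᵥ m₂) =
      (m₁ - m₂) ⬝ᵥ (W *ᵥ (m₁ - m₂)) := by
  have hS₁ : IsUnit S₁.det := h₁.det_pos.ne'.isUnit
  have hS₂ : IsUnit S₂.det := h₂.det_pos.ne'.isUnit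
  have hS₁₂ : IsUnit (S₁ + S₂).det := (h₁.add h₂).det_pos.ne'.isUnit
  subst hm hS hW
  rw [mulVec_mulVec, mul_nonsing_inv _ hS₁₂, one_mulVec, dotProduct_comm,
    add_mulVec_dotProduct_inv_add_mulVec (isHermitian_iff_isSymm.mp h₁.isHermitian)
      (isHermitian_iff_isSymm.mp h₂.isHermitian) hS₁ hS₂ hS₁₂]
  ring
end

section
/- Let γ > 0 and let x ↦ Σ_x be any function assigning to each x ∈ ℝ^d a positive definite self-adjoint real d×d matrix. Define K̂_γ(x,y) = ((π/γ)^d · det(Σ_x + Σ_y))^{−1/2} · exp(−γ‖x−y‖²_{Σ_x+Σ_y}). Then K̂_γ is a positive semidefinite (Mercer) kernel: for every n ∈ ℕ, every x₁,…,xₙ ∈ ℝ^d and every c₁,…,cₙ ∈ ℝ, ∑_{i=1}^n ∑_{j=1}^n c_i c_j K̂_γ(x_i, x_j) ≥ 0; moreover K̂_γ is symmetric, K̂_γ(x,y) = K̂_γ(y,x). -/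
/-!
`K̂_γ(x, y)` is the L²-inner product `∫ g_x g_y` of the normalised Gaussian bumps
`g_x(t) = (π^d det P_x)^{-1/2} exp(-(t - x)ᵀ P_x⁻¹ (t - x))` with `P_x = Σ_x / γ`, so every
quadratic form `∑ cᵢ cⱼ K̂_γ(xᵢ, xⱼ)` equals `∫ (∑ cᵢ g_{xᵢ})² ≥ 0`, and symmetry is the
commutativity of the integrand. The product `g_x g_y` is computed by completing the
square: with `P = P_x`, `Q = P_y` and `u = (P + Q)⁻¹ (x - y)`, the point `m = x - P u`
satisfies `t - x = s - P u` and `t - y = s + Q u` for `s = t - m`, and the cross terms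
`∓ 2 s ⬝ u` cancel.
-/

open Matrix Real

/-- Squared Mahalanobis norm `‖v‖²_Σ = vᵀ Σ⁻¹ v`. -/
noncomputable def mahSq {d : ℕ} (A : Matrix (Fin d) (Fin d) ℝ) (v : Fin d → ℝ) : ℝ :=
  v ⬝ᵥ (A⁻¹ *ᵥ v)

/-- The kernel `K̂_γ(x,y) = ((π/γ)^d det(Σ_x+Σ_y))^{−1/2} exp(−γ‖x−y‖²_{Σ_x+Σ_y})`. -/
noncomputable def hatK {d : ℕ} (γ : ℝ)
    (S : (Fin d → ℝ) → Matrix (Fin d) (Fin d) ℝ) (x y : Fin d → ℝ) : ℝ :=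
  ((π / γ) ^ d * (S x + S y).det) ^ (-(1 / 2) : ℝ) *
    Real.exp (-γ * mahSq (S x + S y) (x - y))

open MeasureTheory

theorem sum_sum_mul_integral_mul_nonneg {α ι : Type*} [MeasurableSpace α] {μ : Measure α}
    [Fintype ι] (f : ι → α → ℝ) (hf : ∀ i j, Integrable (fun t => f i t * f j t) μ)
    (c : ι → ℝ) : 0 ≤ ∑ i, ∑ j, c i * c j * ∫ t, f i t * f j t ∂μ := by
  have hcf : ∀ i j, Integrable (fun t => c i * f i t * (c j * f j t)) μ := fun i j => by
    simpa only [mul_mul_mul_comm] using (hf i j).const_mul (c i * c j)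
  calc 0 ≤ ∫ t, (∑ i, c i * f i t) ^ 2 ∂μ := integral_nonneg fun t => sq_nonneg _
    _ = ∑ i, ∑ j, ∫ t, c i * f i t * (c j * f j t) ∂μ := by
      simp_rw [sq, Finset.sum_mul_sum]
      rw [integral_finsetSum _ fun i _ => integrable_finsetSum _ fun j _ => hcf i j]
      exact Finset.sum_congr rfl fun i _ => integral_finsetSum _ fun j _ => hcf i j
    _ = ∑ i, ∑ j, c i * c j * ∫ t, f i t * f j t ∂μ := by
      simp_rw [← integral_const_mul, mul_mul_mul_comm]

theorem sqrt_pow_of_nonneg {x : ℝ} (hx : 0 ≤ x) (k : ℕ) : √(x ^ k) = √x ^ k := by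
  rw [sqrt_eq_iff_eq_sq (by positivity) (by positivity), ← pow_mul, mul_comm, pow_mul,
    sq_sqrt hx]

section GaussianIntegral

variable {n : Type*} [Fintype n]

theorem exp_neg_dotProduct_self (u : n → ℝ) :
    rexp (-(u ⬝ᵥ u)) = ∏ i, rexp (-1 * u i ^ 2) := by
  simp [dotProduct, ← Real.exp_sum, sq]

theorem integral_exp_neg_dotProduct_self :
    ∫ u : n → ℝ, rexp (-(u ⬝ᵥ u)) = √(π ^ Fintype.card n) := by
  simp_rw [exp_neg_dotProduct_self]
  rw [integral_fintype_prod_volume_eq_prod (fun _ x => rexp (-1 * x ^ 2)), integral_gaussian]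
  simp [sqrt_pow_of_nonneg pi_pos.le]

theorem integrable_exp_neg_dotProduct_self : Integrable fun u : n → ℝ => rexp (-(u ⬝ᵥ u)) := by
  simp_rw [exp_neg_dotProduct_self]
  exact Integrable.fintype_prod (f := fun _ x => rexp (-1 * x ^ 2))
    fun _ => integrable_exp_neg_mul_sq one_pos

variable [DecidableEq n]

theorem measurableEmbedding_mulVec {B : Matrix n n ℝ} (hB : B.det ≠ 0) :
    MeasurableEmbedding (B *ᵥ ·) :=
  have hinj : Function.Injective (B *ᵥ ·) :=
    mulVec_injective_iff_isUnit.mpr ((isUnit_iff_isUnit_det B).mpr hB.isUnit)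
  ((toLin' B).isClosedEmbedding_of_injective (LinearMap.ker_eq_bot.mpr hinj)).measurableEmbedding

theorem map_mulVec_volume {B : Matrix n n ℝ} (hB : B.det ≠ 0) :
    Measure.map (B *ᵥ ·) volume = ENNReal.ofReal |B.det|⁻¹ • volume := by
  rw [← abs_inv]
  exact Real.map_matrix_volume_pi_eq_smul_volume_pi hB

theorem integral_comp_mulVec {B : Matrix n n ℝ} (hB : B.det ≠ 0) (g : (n → ℝ) → ℝ) :
    ∫ x, g (B *ᵥ x) = |B.det|⁻¹ * ∫ x, g x := by
  rw [← (measurableEmbedding_mulVec hB).integral_map, map_mulVec_volume hB, integral_smul_measure,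
    ENNReal.toReal_ofReal (by positivity), smul_eq_mul]

theorem MeasureTheory.Integrable.comp_mulVec {B : Matrix n n ℝ} (hB : B.det ≠ 0)
    {g : (n → ℝ) → ℝ} (hg : Integrable g) : Integrable fun x => g (B *ᵥ x) := by
  rw [← Function.comp_def, ← (measurableEmbedding_mulVec hB).integrable_map_iff,
    map_mulVec_volume hB]
  exact hg.smul_measure ENNReal.ofReal_ne_top

open scoped MatrixOrder in
theorem Matrix.PosDef.exists_dotProduct_mulVec_eq_dotProduct_self {M : Matrix n n ℝ}
    (hM : M.PosDef) : ∃ B : Matrix n n ℝ, B.det ≠ 0 ∧ |B.det| = √M.det ∧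
      ∀ t, t ⬝ᵥ M *ᵥ t = B *ᵥ t ⬝ᵥ B *ᵥ t := by
  obtain ⟨B, rfl⟩ := CStarAlgebra.nonneg_iff_eq_star_mul_self.mp hM.posSemidef.nonneg
  have hdet : (star B * B).det = B.det ^ 2 := by
    rw [star_eq_conjTranspose, conjTranspose_eq_transpose_of_trivial, det_mul, det_transpose, sq]
  refine ⟨B, fun h => ?_, by rw [hdet, sqrt_sq_eq_abs], fun t => ?_⟩
  · simpa [hdet, h] using hM.det_pos
  · rw [← mulVec_mulVec, dotProduct_mulVec, star_eq_conjTranspose,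
      conjTranspose_eq_transpose_of_trivial, vecMul_transpose]

theorem Matrix.PosDef.integral_exp_neg_dotProduct_mulVec {M : Matrix n n ℝ} (hM : M.PosDef) :
    ∫ t : n → ℝ, rexp (-(t ⬝ᵥ M *ᵥ t)) = √(π ^ Fintype.card n / M.det) := by
  obtain ⟨B, hB, hBM, hMB⟩ := hM.exists_dotProduct_mulVec_eq_dotProduct_self
  simp_rw [hMB]
  rw [integral_comp_mulVec hB (fun u => rexp (-(u ⬝ᵥ u))), integral_exp_neg_dotProduct_self, hBM,
    sqrt_div' _ hM.det_pos.le, inv_mul_eq_div]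

theorem Matrix.PosDef.integrable_exp_neg_dotProduct_mulVec {M : Matrix n n ℝ} (hM : M.PosDef) :
    Integrable fun t : n → ℝ => rexp (-(t ⬝ᵥ M *ᵥ t)) := by
  obtain ⟨B, hB, -, hMB⟩ := hM.exists_dotProduct_mulVec_eq_dotProduct_self
  simp_rw [hMB]
  exact integrable_exp_neg_dotProduct_self.comp_mulVec hB

end GaussianIntegral

section ProductOfGaussians

variable {n : Type*} [Fintype n] [DecidableEq n]

theorem add_mulVec_dotProduct_inv_mulVec_add {R : Type*} [CommRing R] {P : Matrix n n R}
    (hPs : P.IsSymm) (hP : IsUnit P.det) (s u : n → R) :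
    (s + P *ᵥ u) ⬝ᵥ P⁻¹ *ᵥ (s + P *ᵥ u) = s ⬝ᵥ P⁻¹ *ᵥ s + 2 * (s ⬝ᵥ u) + u ⬝ᵥ P *ᵥ u := by
  have hcancel : P⁻¹ *ᵥ (P *ᵥ u) = u := by rw [mulVec_mulVec, nonsing_inv_mul _ hP, one_mulVec]
  have hcross : P *ᵥ u ⬝ᵥ P⁻¹ *ᵥ s = s ⬝ᵥ u := by
    rw [← vecMul_transpose, hPs.eq, ← dotProduct_mulVec, mulVec_mulVec, mul_nonsing_inv _ hP,
      one_mulVec, dotProduct_comm]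
  rw [mulVec_add, hcancel, add_dotProduct, dotProduct_add, dotProduct_add, hcross,
    dotProduct_comm (P *ᵥ u) u]
  ring

theorem Matrix.PosDef.dotProduct_inv_mulVec_add_dotProduct_inv_mulVec {P Q : Matrix n n ℝ}
    (hP : P.PosDef) (hQ : Q.PosDef) (s u : n → ℝ) :
    (s - P *ᵥ u) ⬝ᵥ P⁻¹ *ᵥ (s - P *ᵥ u) + (s + Q *ᵥ u) ⬝ᵥ Q⁻¹ *ᵥ (s + Q *ᵥ u)
      = s ⬝ᵥ (P⁻¹ + Q⁻¹) *ᵥ s + u ⬝ᵥ (P + Q) *ᵥ u := by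
  rw [sub_eq_add_neg, ← mulVec_neg,
    add_mulVec_dotProduct_inv_mulVec_add (isHermitian_iff_isSymm.mp hP.isHermitian)
      hP.det_pos.ne'.isUnit,
    add_mulVec_dotProduct_inv_mulVec_add (isHermitian_iff_isSymm.mp hQ.isHermitian)
      hQ.det_pos.ne'.isUnit,
    add_mulVec, add_mulVec, dotProduct_add, dotProduct_add]
  simp only [mulVec_neg, dotProduct_neg, neg_dotProduct, neg_neg]
  ring

theorem det_inv_add_inv {P Q : Matrix n n ℝ} (hP : IsUnit P.det) (hQ : IsUnit Q.det) :
    (P⁻¹ + Q⁻¹).det = (P + Q).det / (P.det * Q.det) := by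
  have hfactor : P⁻¹ * (P + Q) * Q⁻¹ = P⁻¹ + Q⁻¹ := by
    rw [mul_add, add_mul, nonsing_inv_mul _ hP, mul_assoc, mul_nonsing_inv _ hQ, one_mul, mul_one,
      add_comm]
  rw [← hfactor, det_mul, det_mul, det_nonsing_inv, det_nonsing_inv]
  simp only [Ring.inverse_eq_inv']
  ring

/-- The density of the normal distribution with mean `x` and covariance `P / 2`. -/
noncomputable def gaussianFeature (P : Matrix n n ℝ) (x t : n → ℝ) : ℝ :=
  (√(π ^ Fintype.card n * P.det))⁻¹ * rexp (-((t - x) ⬝ᵥ P⁻¹ *ᵥ (t - x)))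

theorem gaussianFeature_mul {P Q : Matrix n n ℝ} (hP : P.PosDef) (hQ : Q.PosDef)
    (x y t : n → ℝ) :
    gaussianFeature P x t * gaussianFeature Q y t =
      (√(π ^ Fintype.card n * P.det))⁻¹ * (√(π ^ Fintype.card n * Q.det))⁻¹ *
        rexp (-((x - y) ⬝ᵥ (P + Q)⁻¹ *ᵥ (x - y))) *
        rexp (-((t - (x - P *ᵥ (P + Q)⁻¹ *ᵥ (x - y))) ⬝ᵥ (P⁻¹ + Q⁻¹) *ᵥ
          (t - (x - P *ᵥ (P + Q)⁻¹ *ᵥ (x - y))))) := by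
  set u := (P + Q)⁻¹ *ᵥ (x - y)
  set s := t - (x - P *ᵥ u)
  have hPQu : P *ᵥ u + Q *ᵥ u = x - y := by
    rw [← add_mulVec, mulVec_mulVec, mul_nonsing_inv _ (hP.add hQ).det_pos.ne'.isUnit, one_mulVec]
  have hx : t - x = s - P *ᵥ u := by
    simp only [s]
    abel
  have hy : t - y = s + Q *ᵥ u := by
    simp only [s]
    linear_combination -hPQu
  have hu : u ⬝ᵥ (P + Q) *ᵥ u = (x - y) ⬝ᵥ (P + Q)⁻¹ *ᵥ (x - y) := by
    rw [mulVec_mulVec, mul_nonsing_inv _ (hP.add hQ).det_pos.ne'.isUnit, one_mulVec,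
      dotProduct_comm]
  have hsquare := hP.dotProduct_inv_mulVec_add_dotProduct_inv_mulVec hQ s u
  rw [← hx, ← hy, hu] at hsquare
  simp only [gaussianFeature]
  rw [mul_mul_mul_comm, ← Real.exp_add, ← neg_add, hsquare, neg_add, Real.exp_add]
  ring

theorem integral_gaussianFeature_mul {P Q : Matrix n n ℝ} (hP : P.PosDef) (hQ : Q.PosDef)
    (x y : n → ℝ) :
    ∫ t, gaussianFeature P x t * gaussianFeature Q y t =
      (√(π ^ Fintype.card n * (P + Q).det))⁻¹ * rexp (-((x - y) ⬝ᵥ (P + Q)⁻¹ *ᵥ (x - y))) := by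
  simp_rw [gaussianFeature_mul hP hQ]
  rw [integral_const_mul, integral_sub_right_eq_self (fun t => rexp (-(t ⬝ᵥ (P⁻¹ + Q⁻¹) *ᵥ t))),
    (hP.inv.add hQ.inv).integral_exp_neg_dotProduct_mulVec,
    det_inv_add_inv hP.det_pos.ne'.isUnit hQ.det_pos.ne'.isUnit]
  have hPdet := hP.det_pos
  have hQdet := hQ.det_pos
  have hPQdet := (hP.add hQ).det_pos
  rw [mul_right_comm, ← sqrt_inv, ← sqrt_inv, ← sqrt_inv, ← sqrt_mul (by positivity),
    ← sqrt_mul (by positivity)]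
  congr 2
  field_simp

theorem integrable_gaussianFeature_mul {P Q : Matrix n n ℝ} (hP : P.PosDef) (hQ : Q.PosDef)
    (x y : n → ℝ) : Integrable fun t => gaussianFeature P x t * gaussianFeature Q y t := by
  simp_rw [gaussianFeature_mul hP hQ]
  exact ((hP.inv.add hQ.inv).integrable_exp_neg_dotProduct_mulVec.comp_sub_right _).const_mul _

end ProductOfGaussians

theorem hatK_eq_integral_gaussianFeature_mul {d : ℕ} {γ : ℝ} (hγ : 0 < γ)
    {S : (Fin d → ℝ) → Matrix (Fin d) (Fin d) ℝ} (hS : ∀ x, (S x).PosDef) (x y : Fin d → ℝ) :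
    hatK γ S x y = ∫ t, gaussianFeature (γ⁻¹ • S x) x t * gaussianFeature (γ⁻¹ • S y) y t := by
  have hM := (hS x).add (hS y)
  have hinv : (γ⁻¹ • (S x + S y))⁻¹ = γ • (S x + S y)⁻¹ :=
    inv_eq_left_inv (by rw [smul_mul_smul_comm, mul_inv_cancel₀ hγ.ne', one_smul,
      nonsing_inv_mul _ hM.det_pos.ne'.isUnit])
  rw [integral_gaussianFeature_mul ((hS x).smul (inv_pos.2 hγ)) ((hS y).smul (inv_pos.2 hγ)),
    ← smul_add, det_smul, hinv, smul_mulVec, dotProduct_smul, smul_eq_mul, hatK, mahSq,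
    rpow_neg (by positivity [hM.det_pos]), ← sqrt_eq_rpow, Fintype.card_fin, neg_mul, inv_pow,
    ← mul_assoc, ← div_eq_mul_inv, div_pow]

/-- For `γ > 0` and any assignment `x ↦ Σ_x` of positive definite
self-adjoint matrices, `K̂_γ` is a positive semidefinite (Mercer) kernel:
all finite quadratic forms `∑ᵢ∑ⱼ cᵢcⱼ K̂_γ(xᵢ,xⱼ)` are nonnegative, and
`K̂_γ` is symmetric. -/
theorem stmt_9 (d : ℕ) (γ : ℝ) (hγ : 0 < γ)
    (S : (Fin d → ℝ) → Matrix (Fin d) (Fin d) ℝ)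
    (hS : ∀ x, (S x).PosDef) :
    (∀ (n : ℕ) (x : Fin n → Fin d → ℝ) (c : Fin n → ℝ),
        0 ≤ ∑ i, ∑ j, c i * c j * hatK γ S (x i) (x j)) ∧
      ∀ x y : Fin d → ℝ, hatK γ S x y = hatK γ S y x := by
  have hT : ∀ x, (γ⁻¹ • S x).PosDef := fun x => (hS x).smul (inv_pos.2 hγ)
  simp_rw [hatK_eq_integral_gaussianFeature_mul hγ hS]
  refine ⟨fun n x c => ?_, fun x y => by simp_rw [mul_comm]⟩
  exact sum_sum_mul_integral_mul_nonneg (fun i => gaussianFeature (γ⁻¹ • S (x i)) (x i))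
    (fun i j => integrable_gaussianFeature_mul (hT (x i)) (hT (x j)) (x i) (x j)) c
end
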